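/- Three-qubit regular tetrahedral basis (same orientation): the vector ψ = (1/2)·[1, (9+3i)/10, (9+3i)/10, (−1+3i)/10, (9+3i)/10, (−1+3i)/10, (−1+3i)/10, 0]ᵀ ∈ ℂ⁸ (coordinates in the basis |000⟩,|001⟩,|010⟩,|011⟩,|100⟩,|101⟩,|110⟩,|111⟩) is a unit vector, its orbit {U_g ψ : g ∈ {0,1}³} under G_tetra^{(3)} is an orthonormal basis of (ℂ²)^{⊗3}, and for every qubit i ∈ {1,2,3} and every P ∈ {X, Y, Z}, ⟨ψ, P^{(i)} ψ⟩ = 9/20; i.e. all three single-qubit Bloch vectors equal (9/20, 9/20, 9/20). -/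

import Mathlib

open Matrix Complex Finset

/-- Pauli X. -/
noncomputable def X2 : Matrix (Fin 2) (Fin 2) ℂ := !![0, 1; 1, 0]

/-- Pauli Y. -/
noncomputable def Y2 : Matrix (Fin 2) (Fin 2) ℂ := !![0, -Complex.I; Complex.I, 0]

/-- Pauli Z. -/
noncomputable def Z2 : Matrix (Fin 2) (Fin 2) ℂ := !![1, 0; 0, -1]

/-- Tensor product of single-qubit operators, as a matrix on (ℂ²)^{⊗n}. -/
noncomputable def tensorOp2 {n : ℕ} (A : Fin n → Matrix (Fin 2) (Fin 2) ℂ) :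
    Matrix (Fin n → Fin 2) (Fin n → Fin 2) ℂ :=
  Matrix.of fun v w => ∏ i, A i (v i) (w i)

/-- Single-site operator A acting on qubit i (identity elsewhere). -/
noncomputable def single2 {n : ℕ} (i : Fin n) (A : Matrix (Fin 2) (Fin 2) ℂ) :
    Matrix (Fin n → Fin 2) (Fin n → Fin 2) ℂ :=
  tensorOp2 fun j => if j = i then A else 1

/-- The inner product ⟨f, g⟩ = Σ conj(f v) g v (antilinear in the first argument). -/
noncomputable def dotc {ι : Type*} [Fintype ι] (f g : ι → ℂ) : ℂ :=
  ∑ v, (starRingEnd ℂ) (f v) * g v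

/-- The unitaries U_g of G_tetra^{(n)}, g = (z₁,…,z_{n−1},x) ∈ {0,1}ⁿ:
U_g = (Z^{(1)}Z^{(2)})^{z₁}···(Z^{(n−1)}Z^{(n)})^{z_{n−1}}·(X⊗⋯⊗X)^x. -/
noncomputable def Ug2 (n : ℕ) [NeZero n] (g : Fin n → Fin 2) :
    Matrix (Fin n → Fin 2) (Fin n → Fin 2) ℂ :=
  (((List.finRange (n - 1)).map fun i =>
      (single2 (⟨i.val, by have := i.isLt; omega⟩ : Fin n) Z2 *
          single2 (⟨i.val + 1, by have := i.isLt; omega⟩ : Fin n) Z2)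
        ^ (g ⟨i.val, by have := i.isLt; omega⟩).val).prod) *
    (tensorOp2 fun _ : Fin n => X2)
      ^ (g ⟨n - 1, by have := Nat.pos_of_ne_zero (NeZero.ne n); omega⟩).val
/-- The three-qubit fiducial state
ψ = (1/2)[1,(9+3i)/10,(9+3i)/10,(−1+3i)/10,(9+3i)/10,(−1+3i)/10,(−1+3i)/10,0]
in the basis |000⟩,…,|111⟩. -/
noncomputable def psi17 : (Fin 3 → Fin 2) → ℂ := fun w =>
  (1 / 2 : ℂ) *
    (![1, (9 + 3 * Complex.I) / 10, (9 + 3 * Complex.I) / 10, (-1 + 3 * Complex.I) / 10,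
        (9 + 3 * Complex.I) / 10, (-1 + 3 * Complex.I) / 10, (-1 + 3 * Complex.I) / 10, 0] :
      Fin 8 → ℂ)
    ⟨4 * (w 0).val + 2 * (w 1).val + (w 2).val,
      by have := (w 0).isLt; have := (w 1).isLt; have := (w 2).isLt; omega⟩

/-!
Explicitly, `(U_g f)(v) = (-1)^(g₀(v₀+v₁) + g₁(v₁+v₂)) · f(v + g₂·(1,1,1))`. The signs are characters
of `v` that are invariant under the global flip, so `⟨U_g ψ, U_h ψ⟩ = ⟨ψ, U_{g+h} ψ⟩` and the
orthonormality of the orbit reduces to the eight values `⟨ψ, U_k ψ⟩ = δ_{k,0}`; eight orthonormal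
vectors span `ℂ⁸`. Every Pauli matrix is monomial (one nonzero entry in each row), so `P^{(i)}`
acts by a phase and a flip of qubit `i`, and each Bloch component is an explicit sum of eight terms.
-/

theorem Fintype.sum_fin_succ_pi {n : ℕ} {α M : Type*} [Fintype α] [AddCommMonoid M]
    (F : (Fin (n + 1) → α) → M) : ∑ v, F v = ∑ a, ∑ v : Fin n → α, F (Fin.cons a v) := by
  rw [← (Fin.consEquiv fun _ => α).sum_comp, Fintype.sum_prod_type]
  rfl

theorem sum_fin_three_fin_two {M : Type*} [AddCommMonoid M] (F : (Fin 3 → Fin 2) → M) :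
    ∑ v, F v = ∑ a : Fin 2, ∑ b : Fin 2, ∑ c : Fin 2, F ![a, b, c] := by
  simp only [Fintype.sum_fin_succ_pi (n := 2), Fintype.sum_fin_succ_pi (n := 1),
    Fintype.sum_fin_succ_pi (n := 0), Fintype.sum_unique]
  rfl

theorem orthonormal_toLp_iff_dotc {ι κ : Type*} [Fintype ι] [DecidableEq κ] (b : κ → ι → ℂ) :
    Orthonormal ℂ (fun k => WithLp.toLp 2 (b k) : κ → EuclideanSpace ℂ ι) ↔
      ∀ k l, dotc (b k) (b l) = if k = l then 1 else 0 := by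
  simp [orthonormal_iff_ite, PiLp.inner_apply, dotc, mul_comm]

theorem span_eq_top_of_dotc_eq_ite {ι κ : Type*} [Fintype ι] [Fintype κ] [DecidableEq κ]
    (b : κ → ι → ℂ) (hb : ∀ k l, dotc (b k) (b l) = if k = l then 1 else 0)
    (hcard : Fintype.card κ = Fintype.card ι) : Submodule.span ℂ (Set.range b) = ⊤ := by
  have hli : LinearIndependent ℂ b :=
    ((orthonormal_toLp_iff_dotc b).2 hb).linearIndependent.map'
      (WithLp.linearEquiv 2 ℂ (ι → ℂ)).toLinearMap (LinearEquiv.ker _)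
  exact hli.span_eq_top_of_card_eq_finrank' (by simpa using hcard)

noncomputable def monomialMatrix2 (σ : Fin 2 → Fin 2) (c : Fin 2 → ℂ) :
    Matrix (Fin 2) (Fin 2) ℂ :=
  of fun a b => if b = σ a then c a else 0

theorem one_eq_monomialMatrix2 : (1 : Matrix (Fin 2) (Fin 2) ℂ) = monomialMatrix2 id 1 := by
  ext a b; fin_cases a <;> fin_cases b <;> rfl

theorem tensorOp2_monomialMatrix2_mulVec {n : ℕ} (σ : Fin n → Fin 2 → Fin 2)
    (c : Fin n → Fin 2 → ℂ) (f : (Fin n → Fin 2) → ℂ) :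
    tensorOp2 (fun i => monomialMatrix2 (σ i) (c i)) *ᵥ f =
      fun v => (∏ i, c i (v i)) * f fun i => σ i (v i) := by
  funext v
  simp [mulVec, dotProduct, tensorOp2, monomialMatrix2, prod_ite_zero, ← funext_iff]

theorem single2_monomialMatrix2_mulVec {n : ℕ} (i : Fin n) (σ : Fin 2 → Fin 2) (c : Fin 2 → ℂ)
    (f : (Fin n → Fin 2) → ℂ) :
    single2 i (monomialMatrix2 σ c) *ᵥ f =
      fun v => c (v i) * f (Function.update v i (σ (v i))) := by
  have hfactors : (fun j => if j = i then monomialMatrix2 σ c else 1) = fun j =>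
      monomialMatrix2 (if j = i then σ else id) (if j = i then c else 1) := by
    funext j; split_ifs <;> simp [one_eq_monomialMatrix2]
  rw [single2, hfactors, tensorOp2_monomialMatrix2_mulVec]
  funext v
  congr 1
  · rw [Fintype.prod_eq_single i fun j hj => by simp [hj]]
    simp
  · congr 1; funext j; by_cases j = i <;> simp_all

noncomputable def sign2 (a : Fin 2) : ℂ := (-1) ^ a.val

@[simp]
theorem sign2_zero : sign2 0 = 1 := by
  simp [sign2]

theorem sign2_add (a b : Fin 2) : sign2 (a + b) = sign2 a * sign2 b := by
  fin_cases a <;> fin_cases b <;> simp [sign2]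

theorem conj_sign2 (a : Fin 2) : starRingEnd ℂ (sign2 a) = sign2 a := by
  simp [sign2]

theorem X2_eq_monomialMatrix2 : X2 = monomialMatrix2 (· + 1) 1 := by
  ext a b; fin_cases a <;> fin_cases b <;> simp [X2, monomialMatrix2]

theorem Y2_eq_monomialMatrix2 : Y2 = monomialMatrix2 (· + 1) ![-Complex.I, Complex.I] := by
  ext a b; fin_cases a <;> fin_cases b <;> simp [Y2, monomialMatrix2]

theorem Z2_eq_monomialMatrix2 : Z2 = monomialMatrix2 id sign2 := by
  ext a b; fin_cases a <;> fin_cases b <;> simp [Z2, monomialMatrix2, sign2]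

theorem single2_Z2_mulVec {n : ℕ} (i : Fin n) (f : (Fin n → Fin 2) → ℂ) :
    single2 i Z2 *ᵥ f = fun v => sign2 (v i) * f v := by
  simp [Z2_eq_monomialMatrix2, single2_monomialMatrix2_mulVec]

theorem tensorOp2_X2_mulVec {n : ℕ} (f : (Fin n → Fin 2) → ℂ) :
    (tensorOp2 fun _ : Fin n => X2) *ᵥ f = fun v => f fun i => v i + 1 := by
  simp [X2_eq_monomialMatrix2, tensorOp2_monomialMatrix2_mulVec]

theorem Ug2_three_eq (g : Fin 3 → Fin 2) : Ug2 3 g =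
    (single2 0 Z2 * single2 1 Z2) ^ (g 0).val *
      ((single2 1 Z2 * single2 2 Z2) ^ (g 1).val * (tensorOp2 fun _ : Fin 3 => X2) ^ (g 2).val) := by
  simp [Ug2, List.finRange, mul_assoc]

theorem Ug2_three_mulVec (g : Fin 3 → Fin 2) (f : (Fin 3 → Fin 2) → ℂ) :
    Ug2 3 g *ᵥ f =
      fun v => sign2 (g 0 * (v 0 + v 1) + g 1 * (v 1 + v 2)) * f fun i => v i + g 2 := by
  have hbit : ∀ x : Fin 2, x = 0 ∨ x = 1 := by decide
  funext v
  rw [Ug2_three_eq]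
  rcases hbit (g 0) with h0 | h0 <;> rcases hbit (g 1) with h1 | h1 <;>
    rcases hbit (g 2) with h2 | h2 <;>
    simp [h0, h1, h2, ← mulVec_mulVec, single2_Z2_mulVec, tensorOp2_X2_mulVec, sign2_add] <;>
    ring

theorem dotc_Ug2_three_mulVec (g h : Fin 3 → Fin 2) (f : (Fin 3 → Fin 2) → ℂ) :
    dotc (Ug2 3 g *ᵥ f) (Ug2 3 h *ᵥ f) = dotc f (Ug2 3 (g + h) *ᵥ f) := by
  simp only [dotc, Ug2_three_mulVec]
  rw [← Equiv.sum_comp (Equiv.addRight fun _ => g 2)]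
  refine sum_congr rfl fun v _ => ?_
  have hflip : ∀ a b : Fin 2, a + b + b = a := by decide
  have hpair : ∀ a b c : Fin 2, a + c + (b + c) = a + b := by decide
  have hsign : sign2 (g 0 * (v 0 + v 1) + g 1 * (v 1 + v 2)) *
      sign2 (h 0 * (v 0 + v 1) + h 1 * (v 1 + v 2)) =
      sign2 ((g 0 + h 0) * (v 0 + v 1) + (g 1 + h 1) * (v 1 + v 2)) := by
    rw [← sign2_add, add_mul, add_mul, add_add_add_comm]
  have hshift : (fun i => v i + g 2 + h 2) = fun i => v i + (g 2 + h 2) := by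
    simp only [add_assoc]
  simp only [Equiv.coe_addRight, Pi.add_apply, map_mul, conj_sign2, hflip, hpair, hshift, ← hsign]
  ring

theorem add_eq_zero_iff_eq_of_fin_two {ι : Type*} (g h : ι → Fin 2) : g + h = 0 ↔ g = h := by
  have hbit : ∀ a b : Fin 2, a + b = 0 ↔ a = b := by decide
  simp only [funext_iff, Pi.add_apply, Pi.zero_apply, hbit]

theorem dotc_psi17_Ug2_mulVec (k : Fin 3 → Fin 2) :
    dotc psi17 (Ug2 3 k *ᵥ psi17) = if k = 0 then 1 else 0 := by
  obtain ⟨a, b, c, rfl⟩ : ∃ a b c, k = ![a, b, c] :=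
    ⟨k 0, k 1, k 2, by ext i; fin_cases i <;> rfl⟩
  rw [dotc, sum_fin_three_fin_two, Ug2_three_mulVec]
  fin_cases a <;> fin_cases b <;> fin_cases c <;>
    simp [Fin.sum_univ_two, psi17, sign2] <;> ring_nf <;> norm_num [Complex.ext_iff]

theorem dotc_psi17_single2_pauli_mulVec (i : Fin 3) (P : Matrix (Fin 2) (Fin 2) ℂ)
    (hP : P ∈ ({X2, Y2, Z2} : Set (Matrix (Fin 2) (Fin 2) ℂ))) :
    dotc psi17 (single2 i P *ᵥ psi17) = 9 / 20 := by
  rcases hP with rfl | rfl | rfl <;>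
    simp only [X2_eq_monomialMatrix2, Y2_eq_monomialMatrix2, Z2_eq_monomialMatrix2,
      single2_monomialMatrix2_mulVec, dotc, sum_fin_three_fin_two] <;>
    fin_cases i <;>
    simp [Fin.sum_univ_two, psi17, sign2] <;> ring_nf <;> norm_num [Complex.ext_iff]

theorem stmt17 :
    dotc psi17 psi17 = 1 ∧
    (∀ g h : Fin 3 → Fin 2,
      dotc (Ug2 3 g *ᵥ psi17) (Ug2 3 h *ᵥ psi17) = if g = h then 1 else 0) ∧
    Submodule.span ℂ (Set.range fun g : Fin 3 → Fin 2 => Ug2 3 g *ᵥ psi17) = ⊤ ∧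
    (∀ i : Fin 3, ∀ P ∈ ({X2, Y2, Z2} : Set (Matrix (Fin 2) (Fin 2) ℂ)),
      dotc psi17 (single2 i P *ᵥ psi17) = 9 / 20) := by
  have horth : ∀ g h : Fin 3 → Fin 2,
      dotc (Ug2 3 g *ᵥ psi17) (Ug2 3 h *ᵥ psi17) = if g = h then 1 else 0 := fun g h => by
    simp only [dotc_Ug2_three_mulVec, dotc_psi17_Ug2_mulVec, add_eq_zero_iff_eq_of_fin_two]
  refine ⟨?_, horth, span_eq_top_of_dotc_eq_ite _ horth rfl, dotc_psi17_single2_pauli_mulVec⟩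
  simpa [Ug2_three_mulVec] using dotc_psi17_Ug2_mulVec 0
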